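/- arXiv:0802.3036 — 2 statements merged into one kernel-verified Lean document; each statement's English description precedes it below -/
import Mathlib

section
/- Let X¹, X² : [0,S] × [0,T] → ℝ² be C² maps with ‖∂_s Xⁱ‖ ≡ 1, and define Tⁱ = ∂_s Xⁱ, Nⁱ = R Tⁱ, κⁱ = ⟨∂_s Tⁱ, Nⁱ⟩, Vⁱ = ⟨∂_t Xⁱ, Nⁱ⟩, vⁱ = ⟨∂_t Xⁱ, Tⁱ⟩. Let θ ∈ (0,π) and suppose that for all t: ⟨T¹(0,t), T²(0,t)⟩ = cos θ, ⟨T¹(0,t), N²(0,t)⟩ = −sin θ, and ⟨N¹(0,t), T²(0,t)⟩ = sin θ. Then (∂_s V¹ + κ¹ v¹)(0,t) = (∂_s V² + κ² v²)(0,t) for all t. -/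
/-- The anticlockwise rotation of `ℝ²` by `π/2`. -/
def rot2 (u : ℝ × ℝ) : ℝ × ℝ := (-u.2, u.1)

/-- The Euclidean inner product on `ℝ²`. -/
def dot2 (u w : ℝ × ℝ) : ℝ := u.1 * w.1 + u.2 * w.2

/-!
Differentiating `V = ⟨∂ₜX, N⟩` in `s`, using `∂ₛT = κN` (since `|T| = 1`), hence `∂ₛN = -κT`, and
`∂ₛ∂ₜX = ∂ₜT` (symmetry of second derivatives), gives `∂ₛV + κv = ⟨∂ₜT, N⟩ =: ω`, the rate at which
the tangent turns in time; also `∂ₜT = ωN`. At the junction, differentiating `⟨T¹, T²⟩ = cos θ`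
in `t` gives `(ω¹ - ω²)⟨N¹, T²⟩ = 0`, and `⟨N¹, T²⟩ = sin θ ≠ 0`, so `ω¹ = ω²`.
-/

open Set Function

lemma dot2_comm (u w : ℝ × ℝ) : dot2 u w = dot2 w u := by
  simp only [dot2]; ring

lemma dot2_smul_left (c : ℝ) (u w : ℝ × ℝ) : dot2 (c • u) w = c * dot2 u w := by
  simp only [dot2, Prod.smul_fst, Prod.smul_snd, smul_eq_mul]; ring

lemma dot2_smul_right (c : ℝ) (u w : ℝ × ℝ) : dot2 u (c • w) = c * dot2 u w := by
  simp only [dot2, Prod.smul_fst, Prod.smul_snd, smul_eq_mul]; ring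

lemma dot2_rot2_right (u w : ℝ × ℝ) : dot2 u (rot2 w) = -dot2 (rot2 u) w := by
  simp only [dot2, rot2]; ring

lemma eq_dot2_rot2_smul_rot2 {g w : ℝ × ℝ} (hg : dot2 g g = 1) (hw : dot2 w g = 0) :
    w = dot2 w (rot2 g) • rot2 g := by
  obtain ⟨a, b⟩ := g; obtain ⟨x, y⟩ := w
  simp only [dot2, rot2, Prod.smul_mk, smul_eq_mul, Prod.mk.injEq] at *
  constructor
  · linear_combination (-x) * hg + a * hw
  · linear_combination (-y) * hg + b * hw

lemma dot2_rot2_of_dot2_eq_zero {g w h : ℝ × ℝ} (hg : dot2 g g = 1) (hw : dot2 w g = 0) :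
    dot2 h (rot2 w) = -(dot2 w (rot2 g) * dot2 h g) := by
  obtain ⟨a, b⟩ := g; obtain ⟨x, y⟩ := w; obtain ⟨p, q⟩ := h
  simp only [dot2, rot2] at *
  linear_combination (p * y - q * x) * hg + (q * a - p * b) * hw

section Derivatives

variable {E F : Type*} [NormedAddCommGroup E] [NormedSpace ℝ E]
  [NormedAddCommGroup F] [NormedSpace ℝ F] {x a b : ℝ}

lemma HasDerivAt.fst {u : ℝ → E × F} {u' : E × F} (hu : HasDerivAt u u' x) :
    HasDerivAt (fun y => (u y).1) u'.1 x :=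
  (hasFDerivAt_fst.comp_hasDerivAt x hu :)

lemma HasDerivAt.snd {u : ℝ → E × F} {u' : E × F} (hu : HasDerivAt u u' x) :
    HasDerivAt (fun y => (u y).2) u'.2 x :=
  (hasFDerivAt_snd.comp_hasDerivAt x hu :)

lemma HasDerivAt.dot2 {u w : ℝ → ℝ × ℝ} {u' w' : ℝ × ℝ}
    (hu : HasDerivAt u u' x) (hw : HasDerivAt w w' x) :
    HasDerivAt (fun y => _root_.dot2 (u y) (w y))
      (_root_.dot2 u' (w x) + _root_.dot2 (u x) w') x :=
  ((hu.fst.fun_mul hw.fst).fun_add (hu.snd.fun_mul hw.snd)).congr_deriv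
    (by simp only [_root_.dot2]; ring)

lemma HasDerivAt.rot2 {u : ℝ → ℝ × ℝ} {u' : ℝ × ℝ} (hu : HasDerivAt u u' x) :
    HasDerivAt (fun y => _root_.rot2 (u y)) (_root_.rot2 u') x :=
  hu.snd.neg.prodMk hu.fst

lemma HasDerivAt.eq_zero_of_const_on_Icc {φ : ℝ → E} {φ' c : E} (hφ : HasDerivAt φ φ' x)
    (hab : a < b) (hx : x ∈ Icc a b) (hconst : ∀ y ∈ Icc a b, φ y = c) : φ' = 0 :=
  (uniqueDiffOn_Icc hab x hx).eq_deriv _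
    (hφ.hasDerivWithinAt.congr (fun y hy => (hconst y hy).symm) (hconst x hx).symm)
    (hasDerivWithinAt_const x _ c)

lemma HasDerivAt.dot2_self_eq_zero {u : ℝ → ℝ × ℝ} {u' : ℝ × ℝ} (hu : HasDerivAt u u' x)
    (hab : a < b) (hx : x ∈ Icc a b) (hunit : ∀ y ∈ Icc a b, _root_.dot2 (u y) (u y) = 1) :
    _root_.dot2 u' (u x) = 0 := by
  have h := (hu.dot2 hu).eq_zero_of_const_on_Icc hab hx hunit
  rw [dot2_comm (u x)] at h
  linarith

lemma eq_of_hasDerivAt_smul_rot2_of_dot2_const_on_Icc {u₁ u₂ : ℝ → ℝ × ℝ} {ω₁ ω₂ c : ℝ}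
    (h₁ : HasDerivAt u₁ (ω₁ • rot2 (u₁ x)) x) (h₂ : HasDerivAt u₂ (ω₂ • rot2 (u₂ x)) x)
    (hab : a < b) (hx : x ∈ Icc a b) (hconst : ∀ y ∈ Icc a b, dot2 (u₁ y) (u₂ y) = c)
    (hne : dot2 (rot2 (u₁ x)) (u₂ x) ≠ 0) : ω₁ = ω₂ := by
  have h := (h₁.dot2 h₂).eq_zero_of_const_on_Icc hab hx hconst
  rw [dot2_smul_left, dot2_smul_right, dot2_rot2_right] at h
  exact mul_right_cancel₀ hne (by linarith)

end Derivatives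

section TwoVariables

variable {E : Type*} [NormedAddCommGroup E] [NormedSpace ℝ E] {s t : ℝ}

lemma hasDerivAt_comp_prodMk_left {g : ℝ × ℝ → E} (hg : DifferentiableAt ℝ g (s, t)) :
    HasDerivAt (fun σ => g (σ, t)) (fderiv ℝ g (s, t) (1, 0)) s :=
  (hg.hasFDerivAt.comp_hasDerivAt s ((hasDerivAt_id s).prodMk (hasDerivAt_const s t)) :)

lemma hasDerivAt_comp_prodMk_right {g : ℝ × ℝ → E} (hg : DifferentiableAt ℝ g (s, t)) :
    HasDerivAt (fun τ => g (s, τ)) (fderiv ℝ g (s, t) (0, 1)) t :=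
  (hg.hasFDerivAt.comp_hasDerivAt t ((hasDerivAt_const t s).prodMk (hasDerivAt_id t)) :)

variable {f : ℝ → ℝ → E}

lemma contDiff_uncurry_deriv_left {m n : WithTop ℕ∞} (hf : ContDiff ℝ n (uncurry f))
    (hmn : m + 1 ≤ n) : ContDiff ℝ m (uncurry fun s t => deriv (fun σ => f σ t) s) := by
  have hd : Differentiable ℝ (uncurry f) :=
    hf.differentiable (ne_bot_of_le_ne_bot one_ne_zero (le_add_self.trans hmn))
  have h : (uncurry fun s t => deriv (fun σ => f σ t) s) = fun q => fderiv ℝ (uncurry f) q (1, 0) :=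
    funext fun q => (hasDerivAt_comp_prodMk_left (hd q)).deriv
  rw [h]
  exact (hf.fderiv_right hmn).clm_apply contDiff_const

lemma contDiff_uncurry_deriv_right {m n : WithTop ℕ∞} (hf : ContDiff ℝ n (uncurry f))
    (hmn : m + 1 ≤ n) : ContDiff ℝ m (uncurry fun s t => deriv (fun τ => f s τ) t) := by
  have hd : Differentiable ℝ (uncurry f) :=
    hf.differentiable (ne_bot_of_le_ne_bot one_ne_zero (le_add_self.trans hmn))
  have h : (uncurry fun s t => deriv (fun τ => f s τ) t) = fun q => fderiv ℝ (uncurry f) q (0, 1) :=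
    funext fun q => (hasDerivAt_comp_prodMk_right (hd q)).deriv
  rw [h]
  exact (hf.fderiv_right hmn).clm_apply contDiff_const

theorem deriv_deriv_curry_comm (hf : ContDiff ℝ 2 (uncurry f)) :
    deriv (fun σ => deriv (fun τ => f σ τ) t) s = deriv (fun τ => deriv (fun σ => f σ τ) s) t := by
  set D := fderiv ℝ (uncurry f)
  have hd : Differentiable ℝ (uncurry f) := hf.differentiable two_ne_zero
  have hD : Differentiable ℝ D := (hf.fderiv_right (m := 1) le_rfl).differentiable one_ne_zero
  have hleft : (fun σ => deriv (fun τ => f σ τ) t) = fun σ => D (σ, t) (0, 1) :=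
    funext fun σ => (hasDerivAt_comp_prodMk_right (hd _)).deriv
  have hright : (fun τ => deriv (fun σ => f σ τ) s) = fun τ => D (s, τ) (1, 0) :=
    funext fun τ => (hasDerivAt_comp_prodMk_left (hd _)).deriv
  rw [hleft, hright, ((hasDerivAt_comp_prodMk_left (hD _)).clm_apply (hasDerivAt_const s _)).deriv,
    ((hasDerivAt_comp_prodMk_right (hD _)).clm_apply (hasDerivAt_const t _)).deriv]
  simpa using hf.contDiffAt.isSymmSndFDerivAt (by simp) (1, 0) (0, 1)

end TwoVariables

noncomputable section

namespace EvolvingCurve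

variable (X : ℝ → ℝ → ℝ × ℝ)

def tangent (s t : ℝ) : ℝ × ℝ := deriv (fun σ => X σ t) s

def velocity (s t : ℝ) : ℝ × ℝ := deriv (fun τ => X s τ) t

def normal (s t : ℝ) : ℝ × ℝ := rot2 (tangent X s t)

def curvature (s t : ℝ) : ℝ := dot2 (deriv (fun σ => tangent X σ t) s) (normal X s t)

def normalVelocity (s t : ℝ) : ℝ := dot2 (velocity X s t) (normal X s t)

def tangentialVelocity (s t : ℝ) : ℝ := dot2 (velocity X s t) (tangent X s t)

def angularVelocity (s t : ℝ) : ℝ := dot2 (deriv (fun τ => tangent X s τ) t) (normal X s t)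

variable {X} (hX : ContDiff ℝ 2 (uncurry X)) {a b s t : ℝ}
include hX

lemma differentiable_uncurry_tangent : Differentiable ℝ (uncurry (tangent X)) :=
  (contDiff_uncurry_deriv_left hX le_rfl).differentiable one_ne_zero

lemma differentiable_uncurry_velocity : Differentiable ℝ (uncurry (velocity X)) :=
  (contDiff_uncurry_deriv_right hX le_rfl).differentiable one_ne_zero

lemma hasDerivAt_tangent_left :
    HasDerivAt (fun σ => tangent X σ t) (deriv (fun σ => tangent X σ t) s) s :=
  (hasDerivAt_comp_prodMk_left (differentiable_uncurry_tangent hX _)).differentiableAt.hasDerivAt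

lemma hasDerivAt_tangent_right :
    HasDerivAt (fun τ => tangent X s τ) (deriv (fun τ => tangent X s τ) t) t :=
  (hasDerivAt_comp_prodMk_right (differentiable_uncurry_tangent hX _)).differentiableAt.hasDerivAt

lemma hasDerivAt_velocity_left :
    HasDerivAt (fun σ => velocity X σ t) (deriv (fun σ => velocity X σ t) s) s :=
  (hasDerivAt_comp_prodMk_left (differentiable_uncurry_velocity hX _)).differentiableAt.hasDerivAt

theorem deriv_normalVelocity_add_curvature_mul_tangentialVelocity (hab : a < b)
    (hs : s ∈ Icc a b) (hunit : ∀ σ ∈ Icc a b, dot2 (tangent X σ t) (tangent X σ t) = 1) :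
    deriv (fun σ => normalVelocity X σ t) s + curvature X s t * tangentialVelocity X s t =
      angularVelocity X s t := by
  have hT := hasDerivAt_tangent_left hX (s := s) (t := t)
  have horth := hT.dot2_self_eq_zero hab hs hunit
  have hcomm : deriv (fun σ => velocity X σ t) s = deriv (fun τ => tangent X s τ) t :=
    deriv_deriv_curry_comm hX
  have hV : HasDerivAt (fun σ => normalVelocity X σ t) _ s :=
    (hasDerivAt_velocity_left hX).dot2 hT.rot2
  rw [hV.deriv, hcomm, dot2_rot2_of_dot2_eq_zero (hunit s hs) horth]
  simp only [curvature, tangentialVelocity, angularVelocity, normal]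
  ring

lemma hasDerivAt_tangent_right_eq_smul_normal (hab : a < b) (ht : t ∈ Icc a b)
    (hunit : ∀ τ ∈ Icc a b, dot2 (tangent X s τ) (tangent X s τ) = 1) :
    HasDerivAt (fun τ => tangent X s τ) (angularVelocity X s t • normal X s t) t := by
  have h := hasDerivAt_tangent_right hX (s := s) (t := t)
  rw [eq_dot2_rot2_smul_rot2 (hunit t ht) (h.dot2_self_eq_zero hab ht hunit)] at h
  exact h

end EvolvingCurve

end

open EvolvingCurve in
theorem stmt12_general (S T : ℝ) (hS : 0 < S) (hT : 0 < T)
    (X : Fin 2 → ℝ → ℝ → ℝ × ℝ)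
    (hX : ∀ i, ContDiff ℝ 2 (fun q : ℝ × ℝ => X i q.1 q.2))
    (Tg Nv : Fin 2 → ℝ → ℝ → ℝ × ℝ) (κ V v : Fin 2 → ℝ → ℝ → ℝ)
    (hTg : ∀ i s t, Tg i s t = deriv (fun σ => X i σ t) s)
    -- ‖∂ₛXⁱ‖ ≡ 1 (arc-length parameterizations)
    (hunit : ∀ i, ∀ s ∈ Set.Icc (0 : ℝ) S, ∀ t ∈ Set.Icc (0 : ℝ) T,
      dot2 (Tg i s t) (Tg i s t) = 1)
    (hNv : ∀ i s t, Nv i s t = rot2 (Tg i s t))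
    (hκ : ∀ i s t, κ i s t = dot2 (deriv (fun σ => Tg i σ t) s) (Nv i s t))
    (hV : ∀ i s t, V i s t = dot2 (deriv (fun τ => X i s τ) t) (Nv i s t))
    (hv : ∀ i s t, v i s t = dot2 (deriv (fun τ => X i s τ) t) (Tg i s t))
    (θ : ℝ) (hθ : θ ∈ Set.Ioo 0 Real.pi)
    -- fixed angle conditions at the junction point s = 0
    (hang1 : ∀ t ∈ Set.Icc (0 : ℝ) T, dot2 (Tg 0 0 t) (Tg 1 0 t) = Real.cos θ)
    (hang3 : ∀ t ∈ Set.Icc (0 : ℝ) T, dot2 (Nv 0 0 t) (Tg 1 0 t) = Real.sin θ) :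
    ∀ t ∈ Set.Icc (0 : ℝ) T,
      deriv (fun σ => V 0 σ t) 0 + κ 0 0 t * v 0 0 t
        = deriv (fun σ => V 1 σ t) 0 + κ 1 0 t * v 1 0 t := by
  intro t ht
  obtain rfl : Tg = fun i => tangent (X i) := funext fun i => funext₂ (hTg i)
  obtain rfl : Nv = fun i => normal (X i) := funext fun i => funext₂ (hNv i)
  obtain rfl : κ = fun i => curvature (X i) := funext fun i => funext₂ (hκ i)
  obtain rfl : V = fun i => normalVelocity (X i) := funext fun i => funext₂ (hV i)
  obtain rfl : v = fun i => tangentialVelocity (X i) := funext fun i => funext₂ (hv i)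
  have h0S : (0 : ℝ) ∈ Icc 0 S := ⟨le_rfl, hS.le⟩
  have hω (i : Fin 2) := deriv_normalVelocity_add_curvature_mul_tangentialVelocity (hX i) hS h0S
    fun σ hσ => hunit i σ hσ t ht
  have hrot (i : Fin 2) := hasDerivAt_tangent_right_eq_smul_normal (hX i) hT ht (hunit i 0 h0S)
  have hsin : Real.sin θ ≠ 0 := (Real.sin_pos_of_pos_of_lt_pi hθ.1 hθ.2).ne'
  calc _ = angularVelocity (X 0) 0 t := hω 0
    _ = angularVelocity (X 1) 0 t :=
      eq_of_hasDerivAt_smul_rot2_of_dot2_const_on_Icc (hrot 0) (hrot 1) hT ht hang1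
        ((hang3 t ht).trans_ne hsin)
    _ = _ := (hω 1).symm

theorem stmt12 (S T : ℝ) (hS : 0 < S) (hT : 0 < T)
    (X : Fin 2 → ℝ → ℝ → ℝ × ℝ)
    (hX : ∀ i, ContDiff ℝ 2 (fun q : ℝ × ℝ => X i q.1 q.2))
    (Tg Nv : Fin 2 → ℝ → ℝ → ℝ × ℝ) (κ V v : Fin 2 → ℝ → ℝ → ℝ)
    (hTg : ∀ i s t, Tg i s t = deriv (fun σ => X i σ t) s)
    -- ‖∂ₛXⁱ‖ ≡ 1 (arc-length parameterizations)
    (hunit : ∀ i, ∀ s ∈ Set.Icc (0 : ℝ) S, ∀ t ∈ Set.Icc (0 : ℝ) T,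
      dot2 (Tg i s t) (Tg i s t) = 1)
    (hNv : ∀ i s t, Nv i s t = rot2 (Tg i s t))
    (hκ : ∀ i s t, κ i s t = dot2 (deriv (fun σ => Tg i σ t) s) (Nv i s t))
    (hV : ∀ i s t, V i s t = dot2 (deriv (fun τ => X i s τ) t) (Nv i s t))
    (hv : ∀ i s t, v i s t = dot2 (deriv (fun τ => X i s τ) t) (Tg i s t))
    (θ : ℝ) (hθ : θ ∈ Set.Ioo 0 Real.pi)
    -- fixed angle conditions at the junction point s = 0
    (hang1 : ∀ t ∈ Set.Icc (0 : ℝ) T, dot2 (Tg 0 0 t) (Tg 1 0 t) = Real.cos θ)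
    (hang2 : ∀ t ∈ Set.Icc (0 : ℝ) T, dot2 (Tg 0 0 t) (Nv 1 0 t) = -Real.sin θ)
    (hang3 : ∀ t ∈ Set.Icc (0 : ℝ) T, dot2 (Nv 0 0 t) (Tg 1 0 t) = Real.sin θ) :
    ∀ t ∈ Set.Icc (0 : ℝ) T,
      deriv (fun σ => V 0 σ t) 0 + κ 0 0 t * v 0 0 t
        = deriv (fun σ => V 1 σ t) 0 + κ 1 0 t * v 1 0 t :=
  stmt12_general S T hS hT X hX Tg Nv κ V v hTg hunit hNv hκ hV hv θ hθ hang1 hang3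
end

section
/- Let θ¹,θ²,θ³ ∈ (0,π) satisfy θ¹+θ²+θ³ = 2π, and let T¹,T²,T³ be unit vectors in ℝ² with Nⁱ = R Tⁱ, such that ⟨Tⁱ,Tʲ⟩ = cos θᵏ and ⟨Tⁱ,Nʲ⟩ = −sin θᵏ for (i,j,k) = (1,2,3), (2,3,1), (3,1,2). Suppose w ∈ ℝ² and real numbers vⁱ, Vⁱ (i = 1,2,3) satisfy w = vⁱ Tⁱ + Vⁱ Nⁱ for each i = 1,2,3. Then (v¹,v²,v³)ᵀ = Q (V¹,V²,V³)ᵀ. -/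
/-- The matrix `Q` relating tangential and normal components at the triple junction. -/
noncomputable def Qmat (θ : Fin 3 → ℝ) : Matrix (Fin 3) (Fin 3) ℝ :=
  (-(1 - Real.cos (θ 0) * Real.cos (θ 1) * Real.cos (θ 2))⁻¹) •
    !![Real.cos (θ 2) * Real.cos (θ 0) * Real.sin (θ 1), Real.sin (θ 2),
         Real.cos (θ 2) * Real.sin (θ 0);
       Real.cos (θ 0) * Real.sin (θ 1), Real.cos (θ 0) * Real.cos (θ 1) * Real.sin (θ 2),
         Real.sin (θ 0);
       Real.sin (θ 1), Real.cos (θ 1) * Real.sin (θ 2),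
         Real.cos (θ 1) * Real.cos (θ 2) * Real.sin (θ 0)]

theorem dot2_add_smul (u x y : ℝ × ℝ) (a b : ℝ) :
    dot2 u (a • x + b • y) = a * dot2 u x + b * dot2 u y := by
  simp only [dot2, Prod.fst_add, Prod.snd_add, Prod.smul_fst, Prod.smul_snd, smul_eq_mul]
  ring

theorem dot2_rot2_self (u : ℝ × ℝ) : dot2 u (rot2 u) = 0 := by
  simp only [dot2, rot2]
  ring

theorem abs_cos_lt_one_of_mem_Ioo {x : ℝ} (hx : x ∈ Set.Ioo 0 Real.pi) : |Real.cos x| < 1 := by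
  have hsin := Real.sin_pos_of_pos_of_lt_pi hx.1 hx.2
  rw [← sq_lt_one_iff_abs_lt_one]
  nlinarith [Real.sin_sq_add_cos_sq x]

theorem one_sub_mul_mul_ne_zero {a b c : ℝ} (ha : |a| < 1) (hb : |b| < 1) (hc : |c| < 1) :
    1 - a * b * c ≠ 0 := by
  have habc : |a * b * c| < 1 := by
    rw [abs_mul, abs_mul]
    exact mul_lt_one_of_nonneg_of_lt_one_left (by positivity)
      (mul_lt_one_of_nonneg_of_lt_one_left (abs_nonneg a) ha hb.le) hc.le
  exact sub_ne_zero.mpr ((le_abs_self _).trans_lt habc).ne'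

theorem tangential_eq_of_frame {c s : ℝ} {w T T' N' : ℝ × ℝ} {v V v' V' : ℝ}
    (hT : dot2 T T = 1) (hT' : dot2 T T' = c) (hN' : dot2 T N' = -s)
    (hw : w = v • T + V • rot2 T) (hw' : w = v' • T' + V' • N') :
    v = c * v' - s * V' := by
  have h := congrArg (dot2 T) (hw.symm.trans hw')
  rw [dot2_add_smul, dot2_add_smul, hT, dot2_rot2_self, hT', hN'] at h
  linarith

theorem eq_Qmat_mulVec_of_cyclic {θ : Fin 3 → ℝ} {v V : Fin 3 → ℝ}
    (hne : 1 - Real.cos (θ 0) * Real.cos (θ 1) * Real.cos (θ 2) ≠ 0)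
    (hv : ∀ i : Fin 3, v i = Real.cos (θ (i + 2)) * v (i + 1) - Real.sin (θ (i + 2)) * V (i + 1)) :
    v = (Qmat θ).mulVec V := by
  have e0 := hv 0
  have e1 := hv 1
  have e2 := hv 2
  simp only [Fin.isValue, Fin.reduceAdd] at e0 e1 e2
  funext i
  fin_cases i <;>
    simp only [Fin.zero_eta, Fin.mk_one, Fin.reduceFinMk, Fin.isValue, Qmat, Matrix.mulVec,
      dotProduct, Fin.sum_univ_three, Matrix.smul_apply, Matrix.of_apply, Matrix.cons_val',
      Matrix.cons_val_fin_one, Matrix.cons_val_zero, Matrix.cons_val_one, Matrix.cons_val,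
      smul_eq_mul] <;>
    field_simp
  · linear_combination e0 + Real.cos (θ 2) * e1 + Real.cos (θ 2) * Real.cos (θ 0) * e2
  · linear_combination e1 + Real.cos (θ 0) * e2 + Real.cos (θ 0) * Real.cos (θ 1) * e0
  · linear_combination e2 + Real.cos (θ 1) * e0 + Real.cos (θ 1) * Real.cos (θ 2) * e1

theorem stmt18_general (θ : Fin 3 → ℝ) (hθ : ∀ i, θ i ∈ Set.Ioo 0 Real.pi)
    (T N : Fin 3 → ℝ × ℝ)
    (hTunit : ∀ i, dot2 (T i) (T i) = 1)
    (hN : ∀ i, N i = rot2 (T i))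
    (hang1 : ∀ i : Fin 3, dot2 (T i) (T (i + 1)) = Real.cos (θ (i + 2)))
    (hang2 : ∀ i : Fin 3, dot2 (T i) (N (i + 1)) = -Real.sin (θ (i + 2)))
    (w : ℝ × ℝ) (v V : Fin 3 → ℝ)
    (hw : ∀ i, w = v i • T i + V i • N i) :
    v = (Qmat θ).mulVec V := by
  have hcos i := abs_cos_lt_one_of_mem_Ioo (hθ i)
  refine eq_Qmat_mulVec_of_cyclic (one_sub_mul_mul_ne_zero (hcos 0) (hcos 1) (hcos 2)) fun i => ?_
  exact tangential_eq_of_frame (hTunit i) (hang1 i) (hang2 i) (hN i ▸ hw i) (hw (i + 1))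

theorem stmt18 (θ : Fin 3 → ℝ) (hθ : ∀ i, θ i ∈ Set.Ioo 0 Real.pi)
    (hsum : θ 0 + θ 1 + θ 2 = 2 * Real.pi)
    (T N : Fin 3 → ℝ × ℝ)
    (hTunit : ∀ i, dot2 (T i) (T i) = 1)
    (hN : ∀ i, N i = rot2 (T i))
    (hang1 : ∀ i : Fin 3, dot2 (T i) (T (i + 1)) = Real.cos (θ (i + 2)))
    (hang2 : ∀ i : Fin 3, dot2 (T i) (N (i + 1)) = -Real.sin (θ (i + 2)))
    (w : ℝ × ℝ) (v V : Fin 3 → ℝ)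
    (hw : ∀ i, w = v i • T i + V i • N i) :
    v = (Qmat θ).mulVec V :=
  stmt18_general θ hθ T N hTunit hN hang1 hang2 w v V hw
end
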